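/- Let n, d₁, d₂ be positive integers and let U : ℂⁿ ⊗ ℂ² → ℂ^{d₁} ⊗ ℂ^{d₂} be a linear isometry. Let Λ be the set of hidden-measurement pairs (P, w) for U, regarded as a subset of (2×2 complex matrices) × ℂⁿ. Suppose π : [0,1] → Λ is an infinitely differentiable path, written π(t) = (π₁(t), π₂(t)) with π₁(t) a rank-one orthogonal projection on ℂ² and π₂(t) a unit vector in ℂⁿ for each t. Then π₁(0) = π₁(1). -/

import Mathlib

open scoped ComplexConjugate Matrix

noncomputable section

/-- The matrix form of a vector in `ℂ^{d₁} ⊗ ℂ^{d₂}`. -/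
def MatOf {d₁ d₂ : ℕ} (c : EuclideanSpace ℂ (Fin d₁ × Fin d₂)) :
    Matrix (Fin d₁) (Fin d₂) ℂ :=
  Matrix.of fun i j => c (i, j)

/-- The tensor product `w ⊗ x` of `w ∈ ℂⁿ` with `x ∈ ℂ²`. -/
def tensorWith2 {n : ℕ} (w : EuclideanSpace ℂ (Fin n)) (x : Fin 2 → ℂ) :
    EuclideanSpace ℂ (Fin n × Fin 2) :=
  WithLp.toLp 2 (fun p => w p.1 * x p.2)

/-- `R_w = Mat(U(w ⊗ e₁))`. -/
def Rmat {n d₁ d₂ : ℕ}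
    (U : EuclideanSpace ℂ (Fin n × Fin 2) →ₗᵢ[ℂ] EuclideanSpace ℂ (Fin d₁ × Fin d₂))
    (w : EuclideanSpace ℂ (Fin n)) : Matrix (Fin d₁) (Fin d₂) ℂ :=
  MatOf (U (tensorWith2 w ![1, 0]))

/-- `S_w = Mat(U(w ⊗ e₂))`. -/
def Smat {n d₁ d₂ : ℕ}
    (U : EuclideanSpace ℂ (Fin n × Fin 2) →ₗᵢ[ℂ] EuclideanSpace ℂ (Fin d₁ × Fin d₂))
    (w : EuclideanSpace ℂ (Fin n)) : Matrix (Fin d₁) (Fin d₂) ℂ :=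
  MatOf (U (tensorWith2 w ![0, 1]))

/-- The rank-one orthogonal projection onto the span of the unit vector `(x, y) ∈ ℂ²`. -/
def projOf (x y : ℂ) : Matrix (Fin 2) (Fin 2) ℂ :=
  !![x * conj x, x * conj y; y * conj x, y * conj y]

/-- `(P, w)` is a hidden-measurement pair for the isometry `U`. -/
def IsHiddenPair {n d₁ d₂ : ℕ}
    (U : EuclideanSpace ℂ (Fin n × Fin 2) →ₗᵢ[ℂ] EuclideanSpace ℂ (Fin d₁ × Fin d₂))
    (P : Matrix (Fin 2) (Fin 2) ℂ) (w : EuclideanSpace ℂ (Fin n)) : Prop :=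
  ‖w‖ = 1 ∧
  ∃ x y : ℂ, ‖x‖ ^ 2 + ‖y‖ ^ 2 = 1 ∧ P = projOf x y ∧
    (x • Rmat U w + y • Smat U w) * ((-(conj y)) • Rmat U w + (conj x) • Smat U w)ᴴ = 0 ∧
    (x • Rmat U w + y • Smat U w)ᴴ * ((-(conj y)) • Rmat U w + (conj x) • Smat U w) = 0

section auxiliary

variable {n d₁ d₂ : ℕ}

@[simp] lemma MatOf_apply (c : EuclideanSpace ℂ (Fin d₁ × Fin d₂)) (i : Fin d₁) (j : Fin d₂) :
    MatOf c i j = c (i, j) := rfl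

@[simp] lemma tensorWith2_apply (w : EuclideanSpace ℂ (Fin n)) (x : Fin 2 → ℂ)
    (p : Fin n × Fin 2) : tensorWith2 w x p = w p.1 * x p.2 := rfl

lemma MatOf_add (u v : EuclideanSpace ℂ (Fin d₁ × Fin d₂)) :
    MatOf (u + v) = MatOf u + MatOf v := by
  ext i j; simp [MatOf]

lemma MatOf_smul (c : ℂ) (u : EuclideanSpace ℂ (Fin d₁ × Fin d₂)) :
    MatOf (c • u) = c • MatOf u := by
  ext i j; simp [MatOf]

lemma tensorWith2_smul_right (w : EuclideanSpace ℂ (Fin n)) (c : ℂ) (x : Fin 2 → ℂ) :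
    tensorWith2 w (c • x) = c • tensorWith2 w x := by
  ext p
  show w p.1 * (c * x p.2) = c * (w p.1 * x p.2)
  ring

lemma tensorWith2_add_right (w : EuclideanSpace ℂ (Fin n)) (x y : Fin 2 → ℂ) :
    tensorWith2 w (x + y) = tensorWith2 w x + tensorWith2 w y := by
  ext p
  show w p.1 * (x p.2 + y p.2) = w p.1 * x p.2 + w p.1 * y p.2
  ring

lemma tensorWith2_eq_sum (w : EuclideanSpace ℂ (Fin n)) (x : Fin 2 → ℂ) :
    tensorWith2 w x
      = ∑ q : Fin n × Fin 2, (w q.1 * x q.2) • EuclideanSpace.single q (1 : ℂ) := by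
  ext p
  rw [WithLp.ofLp_sum, Finset.sum_apply]
  simp only [PiLp.smul_apply, EuclideanSpace.single_apply, smul_eq_mul, mul_ite, mul_one,
    mul_zero]
  simp

lemma inner_tensor (w w' : EuclideanSpace ℂ (Fin n)) (x x' : Fin 2 → ℂ) :
    (inner ℂ (tensorWith2 w x) (tensorWith2 w' x') : ℂ)
      = (inner ℂ w w' : ℂ) * (∑ j, conj (x j) * x' j) := by
  simp only [PiLp.inner_apply, RCLike.inner_apply, tensorWith2_apply]
  rw [Fintype.sum_prod_type]
  rw [Finset.sum_mul_sum]
  congr 1; funext i; congr 1; funext j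
  simp [map_mul]; ring

lemma trace_matof (u v : EuclideanSpace ℂ (Fin d₁ × Fin d₂)) :
    ((MatOf u)ᴴ * MatOf v).trace = (inner ℂ u v : ℂ) := by
  simp only [Matrix.trace, Matrix.diag_apply, Matrix.mul_apply, Matrix.conjTranspose_apply,
    MatOf_apply, PiLp.inner_apply, RCLike.inner_apply]
  rw [Fintype.sum_prod_type]
  rw [Finset.sum_comm]
  exact Finset.sum_congr rfl fun _ _ => Finset.sum_congr rfl fun _ _ => mul_comm _ _

open scoped ComplexOrder in
lemma support_proj_exists {m : ℕ} (H : Matrix (Fin m) (Fin m) ℂ) (hH : H.IsHermitian) :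
    ∃ Q Hinv : Matrix (Fin m) (Fin m) ℂ,
      Qᴴ = Q ∧ Q * H = H ∧ H * Q = H ∧ Hinv * H = Q := by
  classical
  set u : Matrix (Fin m) (Fin m) ℂ := (hH.eigenvectorUnitary : Matrix (Fin m) (Fin m) ℂ)
    with hudef
  have huu : star u * u = 1 := by
    have := hH.eigenvectorUnitary.2
    rw [Unitary.mem_iff] at this
    exact this.1
  have hspec : H = u * Matrix.diagonal (RCLike.ofReal ∘ hH.eigenvalues) * star u :=
    hH.spectral_theorem
  set e : Fin m → ℝ := hH.eigenvalues with hedef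
  set lam : Fin m → ℂ := RCLike.ofReal ∘ e with hlamdef
  set ind : Fin m → ℂ := fun i => if e i = 0 then 0 else 1 with hinddef
  set dinv : Fin m → ℂ := fun i => if e i = 0 then 0 else (RCLike.ofReal (e i) : ℂ)⁻¹
    with hdinvdef
  have sandwich : ∀ f g : Fin m → ℂ,
      (u * Matrix.diagonal f * star u) * (u * Matrix.diagonal g * star u)
        = u * Matrix.diagonal (fun i => f i * g i) * star u := by
    intro f g
    have h1 : (u * Matrix.diagonal f * star u) * (u * Matrix.diagonal g * star u)
        = u * Matrix.diagonal f * (star u * u) * Matrix.diagonal g * star u := by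
      simp only [Matrix.mul_assoc]
    rw [h1, huu, Matrix.mul_one, Matrix.mul_assoc u, Matrix.diagonal_mul_diagonal]
  refine ⟨u * Matrix.diagonal ind * star u, u * Matrix.diagonal dinv * star u, ?_, ?_, ?_, ?_⟩
  · have hstar : star ind = ind := by
      funext i; by_cases h0 : e i = 0 <;> simp [hinddef, h0]
    calc (u * Matrix.diagonal ind * star u)ᴴ
        = star (star u) * (Matrix.diagonal ind)ᴴ * star u := by
          simp only [Matrix.conjTranspose_mul, Matrix.star_eq_conjTranspose,
            Matrix.conjTranspose_conjTranspose, Matrix.mul_assoc]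
    _ = u * Matrix.diagonal ind * star u := by
          rw [star_star, Matrix.diagonal_conjTranspose, hstar]
  · rw [hspec, sandwich]
    have : (fun i => ind i * lam i) = lam := by
      funext i; by_cases h0 : e i = 0 <;> simp [hinddef, hlamdef, h0, Function.comp]
    rw [this]
  · rw [hspec, sandwich]
    have : (fun i => lam i * ind i) = lam := by
      funext i; by_cases h0 : e i = 0 <;> simp [hinddef, hlamdef, h0, Function.comp]
    rw [this]
  · rw [hspec, sandwich]
    have : (fun i => dinv i * lam i) = ind := by
      funext i
      by_cases h0 : e i = 0
      · simp [hdinvdef, hinddef, hlamdef, h0, Function.comp]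
      · simp only [hdinvdef, hinddef, hlamdef, Function.comp, if_neg h0]
        exact inv_mul_cancel₀ (by simpa using h0)
    rw [this]

open scoped ComplexOrder in
lemma key_spectral {d₁ d₂ : ℕ} (A Y : Matrix (Fin d₁) (Fin d₂) ℂ) (β : ℂ)
    (h : Aᴴ * A * (Yᴴ * A) = β • (Aᴴ * A * (Aᴴ * A)))
    (htr : (Yᴴ * A).trace = 0) (hA : (Aᴴ * A).trace = 1) : β = 0 := by
  obtain ⟨Q, Hinv, hQherm, hQH, hHQ, hinvH⟩ :=
    support_proj_exists (Aᴴ * A) (Matrix.isHermitian_conjTranspose_mul_self A)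
  have hAQ : A * Q = A := by
    have hC : (A * Q - A)ᴴ * (A * Q - A) = 0 := by
      have e1 : (A * Q - A)ᴴ = Q * Aᴴ - Aᴴ := by
        rw [Matrix.conjTranspose_sub, Matrix.conjTranspose_mul, hQherm]
      rw [e1, Matrix.sub_mul, Matrix.mul_sub, Matrix.mul_sub]
      have e2 : Q * Aᴴ * (A * Q) = Aᴴ * A := by
        rw [← Matrix.mul_assoc, Matrix.mul_assoc Q Aᴴ A, hQH, hHQ]
      have e3 : Q * Aᴴ * A = Aᴴ * A := by rw [Matrix.mul_assoc, hQH]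
      have e4 : Aᴴ * (A * Q) = Aᴴ * A := by rw [← Matrix.mul_assoc, hHQ]
      rw [e2, e3, e4]
      simp
    simpa [sub_eq_zero] using Matrix.conjTranspose_mul_self_eq_zero.mp hC
  have hQM : Q * (Yᴴ * A) = β • (Aᴴ * A) := by
    calc Q * (Yᴴ * A) = Hinv * (Aᴴ * A) * (Yᴴ * A) := by rw [hinvH]
    _ = Hinv * (Aᴴ * A * (Yᴴ * A)) := by rw [Matrix.mul_assoc]
    _ = Hinv * (β • (Aᴴ * A * (Aᴴ * A))) := by rw [h]
    _ = β • (Hinv * (Aᴴ * A * (Aᴴ * A))) := by rw [Matrix.mul_smul]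
    _ = β • (Hinv * (Aᴴ * A) * (Aᴴ * A)) := by
          rw [← Matrix.mul_assoc Hinv (Aᴴ * A) (Aᴴ * A)]
    _ = β • (Aᴴ * A) := by rw [hinvH, hQH]
  have t1 : (Q * (Yᴴ * A)).trace = β := by
    rw [hQM, Matrix.trace_smul, hA]; simp
  have t2 : (Q * (Yᴴ * A)).trace = 0 := by
    rw [Matrix.trace_mul_comm, Matrix.mul_assoc, hAQ, htr]
  rw [← t1, t2]

lemma projOf_entry (x y : ℂ) (i j : Fin 2) :
    projOf x y i j = ![x, y] i * conj (![x, y] j) := by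
  fin_cases i <;> fin_cases j <;> simp [projOf]

end auxiliary

/-- Along any infinitely differentiable path inside the set `Λ` of
hidden-measurement pairs for `U` (smooth on an open neighborhood of `[0,1]`), the projection
coordinate has the same value at the endpoints. -/
theorem projection_constant_along_smooth_path (n d₁ d₂ : ℕ)
    (hn : 0 < n) (hd₁ : 0 < d₁) (hd₂ : 0 < d₂)
    (U : EuclideanSpace ℂ (Fin n × Fin 2) →ₗᵢ[ℂ] EuclideanSpace ℂ (Fin d₁ × Fin d₂))
    (γ : ℝ → (Fin 2 → Fin 2 → ℂ) × EuclideanSpace ℂ (Fin n))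
    (s : Set ℝ) (hs : IsOpen s) (hsub : Set.Icc (0 : ℝ) 1 ⊆ s)
    (hsmooth : ContDiffOn ℝ (⊤ : ℕ∞) γ s)
    (hmem : ∀ t ∈ Set.Icc (0 : ℝ) 1,
      IsHiddenPair U (Matrix.of ((γ t).1)) ((γ t).2)) :
    Matrix.of ((γ 0).1) = Matrix.of ((γ 1).1) := by
  classical
  have key : ∀ t₀ ∈ Set.Icc (0:ℝ) 1, HasDerivAt (fun t => (γ t).1) 0 t₀ := by
    intro t₀ ht₀
    obtain ⟨hw0, x₀, y₀, hxy0, hP0, heqa0, heqb0⟩ := hmem t₀ ht₀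
    set v₀ : Fin 2 → ℂ := ![x₀, y₀] with hv₀def
    have hv0sum : conj x₀ * x₀ + conj y₀ * y₀ = 1 := by
      have h1 : (Complex.normSq x₀ : ℂ) + (Complex.normSq y₀ : ℂ) = 1 := by
        rw [← Complex.ofReal_add]
        rw [← Complex.sq_norm, ← Complex.sq_norm, hxy0, Complex.ofReal_one]
      rw [← Complex.normSq_eq_conj_mul_self, ← Complex.normSq_eq_conj_mul_self]
      exact h1
    -- the basic paths
    set vf : ℝ → Fin 2 → ℂ := fun t i => ∑ j, (γ t).1 i j * v₀ j with hvfdef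
    set vp : ℝ → Fin 2 → ℂ := fun t => ![-(conj (vf t 1)), conj (vf t 0)] with hvpdef
    set af : ℝ → EuclideanSpace ℂ (Fin d₁ × Fin d₂) :=
      fun t => U (tensorWith2 ((γ t).2) (vf t)) with hafdef
    set bf : ℝ → EuclideanSpace ℂ (Fin d₁ × Fin d₂) :=
      fun t => U (tensorWith2 ((γ t).2) (vp t)) with hbfdef
    set N : ℝ → ℂ := fun t => ∑ k, vf t k * conj (vf t k) with hNdef
    -- entries of the projection path
    have hPe : ∀ t ∈ Set.Icc (0:ℝ) 1, ∃ x y : ℂ,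
        (conj x * x + conj y * y = 1) ∧
        (∀ i j, (γ t).1 i j = ![x, y] i * conj (![x, y] j)) ∧
        (x • Rmat U ((γ t).2) + y • Smat U ((γ t).2)) *
          ((-(conj y)) • Rmat U ((γ t).2) + (conj x) • Smat U ((γ t).2))ᴴ = 0 ∧
        (x • Rmat U ((γ t).2) + y • Smat U ((γ t).2))ᴴ *
          ((-(conj y)) • Rmat U ((γ t).2) + (conj x) • Smat U ((γ t).2)) = 0 := by
      intro t ht
      obtain ⟨hw, x, y, hxy, hP, heqa, heqb⟩ := hmem t ht
      refine ⟨x, y, ?_, ?_, heqa, heqb⟩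
      · have h1 : (Complex.normSq x : ℂ) + (Complex.normSq y : ℂ) = 1 := by
          rw [← Complex.ofReal_add]
          rw [← Complex.sq_norm, ← Complex.sq_norm, hxy, Complex.ofReal_one]
        rw [← Complex.normSq_eq_conj_mul_self, ← Complex.normSq_eq_conj_mul_self]
        exact h1
      · intro i j
        have h := congrFun (congrFun hP i) j
        exact h.trans (projOf_entry x y i j)
    -- the combination lemma
    have hRS : ∀ (w : EuclideanSpace ℂ (Fin n)) (x y : ℂ),
        MatOf (U (tensorWith2 w ![x, y])) = x • Rmat U w + y • Smat U w := by
      intro w x y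
      have hxy : (![x, y] : Fin 2 → ℂ) = x • ![1, 0] + y • ![0, 1] := by
        funext j; fin_cases j <;> simp
      rw [hxy, tensorWith2_add_right, tensorWith2_smul_right, tensorWith2_smul_right,
        map_add, map_smul, map_smul, MatOf_add, MatOf_smul, MatOf_smul]
      rfl
    -- structural facts along the path
    have hstruct : ∀ t ∈ Set.Icc (0:ℝ) 1,
        (MatOf (af t)) * (MatOf (bf t))ᴴ = 0 ∧
        (MatOf (af t))ᴴ * (MatOf (bf t)) = 0 ∧
        (∀ i j, vf t i * conj (vf t j) = (γ t).1 i j * N t) := by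
      intro t ht
      obtain ⟨x, y, hxy, hPe', heqa, heqb⟩ := hPe t ht
      set cc : ℂ := conj x * v₀ 0 + conj y * v₀ 1 with hccdef
      have hvf : ∀ i, vf t i = ![x, y] i * cc := by
        intro i
        rw [hvfdef]
        simp only [Fin.sum_univ_two]
        rw [hPe' i 0, hPe' i 1, hccdef]
        simp only [Matrix.cons_val_zero, Matrix.cons_val_one, Matrix.head_cons]
        ring
      have hvpa : vp t 0 = conj cc * (-(conj y)) := by
        rw [hvpdef]
        simp only [Matrix.cons_val_zero]
        rw [hvf 1]
        simp only [Matrix.cons_val_one, Matrix.head_cons, Matrix.cons_val_zero, map_mul]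
        ring
      have hvpb : vp t 1 = conj cc * conj x := by
        rw [hvpdef]
        simp only [Matrix.cons_val_one, Matrix.head_cons]
        rw [hvf 0]
        simp only [Matrix.cons_val_zero, map_mul]
        ring
      have hvp : ∀ i, vp t i = conj cc * (![-(conj y), conj x] i) := by
        intro i
        fin_cases i
        · exact hvpa
        · exact hvpb
      have hta : tensorWith2 ((γ t).2) (vf t) = cc • tensorWith2 ((γ t).2) ![x, y] := by
        ext p
        simp only [tensorWith2_apply, PiLp.smul_apply, smul_eq_mul, hvf p.2]
        ring
      have htb : tensorWith2 ((γ t).2) (vp t)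
          = conj cc • tensorWith2 ((γ t).2) ![-(conj y), conj x] := by
        ext p
        simp only [tensorWith2_apply, PiLp.smul_apply, smul_eq_mul, hvp p.2]
        ring
      have hA : MatOf (af t) = cc • (x • Rmat U ((γ t).2) + y • Smat U ((γ t).2)) := by
        rw [hafdef]
        simp only
        rw [hta, map_smul, MatOf_smul, hRS]
      have hB : MatOf (bf t)
          = conj cc • ((-(conj y)) • Rmat U ((γ t).2) + (conj x) • Smat U ((γ t).2)) := by
        rw [hbfdef]
        simp only
        rw [htb, map_smul, MatOf_smul, hRS]
      refine ⟨?_, ?_, ?_⟩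
      · rw [hA, hB, Matrix.conjTranspose_smul, Matrix.smul_mul, Matrix.mul_smul, heqa]
        simp
      · rw [hA, hB, Matrix.conjTranspose_smul, Matrix.smul_mul, Matrix.mul_smul, heqb]
        simp
      · intro i j
        have hNt : N t = cc * conj cc := by
          rw [hNdef]
          simp only [Fin.sum_univ_two]
          rw [hvf 0, hvf 1]
          simp only [Matrix.cons_val_zero, Matrix.cons_val_one, Matrix.head_cons, map_mul]
          linear_combination (cc * conj cc) * hxy
        rw [hNt, hvf i, hvf j, hPe' i j, map_mul]
        ring
    -- value at the base point
    have hv00 : v₀ 0 = x₀ := rfl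
    have hv01 : v₀ 1 = y₀ := rfl
    have hP0e : ∀ i j, (γ t₀).1 i j = v₀ i * conj (v₀ j) := by
      intro i j
      have h := congrFun (congrFun hP0 i) j
      exact h.trans (projOf_entry x₀ y₀ i j)
    have hvf0 : vf t₀ = v₀ := by
      funext i
      rw [hvfdef]
      simp only [Fin.sum_univ_two]
      rw [hP0e i 0, hP0e i 1, hv00, hv01]
      linear_combination (v₀ i) * hv0sum
    have hvp00 : vp t₀ 0 = -(conj y₀) := by
      rw [hvpdef]
      simp only [Matrix.cons_val_zero]
      rw [hvf0, hv01]
    have hvp01 : vp t₀ 1 = conj x₀ := by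
      rw [hvpdef]
      simp only [Matrix.cons_val_one, Matrix.head_cons, Matrix.cons_val_zero]
      rw [hvf0, hv00]
    -- differentiability
    have hγdiff : DifferentiableAt ℝ γ t₀ :=
      (hsmooth.contDiffAt (hs.mem_nhds (hsub ht₀))).differentiableAt (by simp)
    have hγd : HasDerivAt γ (deriv γ t₀) t₀ := hγdiff.hasDerivAt
    set g' := deriv γ t₀ with hg'def
    have hPderiv : ∀ i j, HasDerivAt (fun t => (γ t).1 i j) (g'.1 i j) t₀ := by
      intro i j
      exact ((ContinuousLinearMap.proj (R := ℝ) (φ := fun _ : Fin 2 => ℂ) j).comp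
        ((ContinuousLinearMap.proj (R := ℝ) (φ := fun _ : Fin 2 => Fin 2 → ℂ) i).comp
          (ContinuousLinearMap.fst ℝ (Fin 2 → Fin 2 → ℂ)
            (EuclideanSpace ℂ (Fin n))))).hasFDerivAt.comp_hasDerivAt t₀ hγd
    have hwderiv : ∀ q : Fin n, HasDerivAt (fun t => (γ t).2 q) (g'.2 q) t₀ := by
      intro q
      exact (((EuclideanSpace.proj q).restrictScalars ℝ).comp
        (ContinuousLinearMap.snd ℝ (Fin 2 → Fin 2 → ℂ)
          (EuclideanSpace ℂ (Fin n)))).hasFDerivAt.comp_hasDerivAt t₀ hγd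
    have hconj : ∀ {h : ℝ → ℂ} {h' : ℂ}, HasDerivAt h h' t₀ →
        HasDerivAt (fun t => conj (h t)) (conj h') t₀ := by
      intro h h' hh
      have := Complex.conjCLE.toContinuousLinearMap.hasFDerivAt.comp_hasDerivAt t₀ hh
      exact this
    set m' : Fin 2 → ℂ := fun i => ∑ j, g'.1 i j * v₀ j with hm'def
    have hvf' : ∀ i, HasDerivAt (fun t => vf t i) (m' i) t₀ := by
      intro i
      exact HasDerivAt.fun_sum fun j _ => (hPderiv i j).mul_const (v₀ j)
    set mp' : Fin 2 → ℂ := ![-(conj (m' 1)), conj (m' 0)] with hmp'def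
    have hmp0 : mp' 0 = -(conj (m' 1)) := rfl
    have hmp1 : mp' 1 = conj (m' 0) := rfl
    have hvp' : ∀ i, HasDerivAt (fun t => vp t i) (mp' i) t₀ := by
      intro i
      fin_cases i
      · exact (hconj (hvf' 1)).neg
      · exact hconj (hvf' 0)
    -- expansion of U ∘ tensor
    set Cm : (Fin n × Fin 2) → EuclideanSpace ℂ (Fin d₁ × Fin d₂) :=
      fun q => U (EuclideanSpace.single q 1) with hCmdef
    have hUexp : ∀ (wv : EuclideanSpace ℂ (Fin n)) (xv : Fin 2 → ℂ) (p : Fin d₁ × Fin d₂),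
        U (tensorWith2 wv xv) p = ∑ q, (wv q.1 * xv q.2) * Cm q p := by
      intro wv xv p
      rw [tensorWith2_eq_sum, map_sum]
      rw [WithLp.ofLp_sum, Finset.sum_apply]
      simp only [map_smul, PiLp.smul_apply, smul_eq_mul, hCmdef]
    set a' : EuclideanSpace ℂ (Fin d₁ × Fin d₂) :=
      U (tensorWith2 g'.2 v₀ + tensorWith2 ((γ t₀).2) m') with ha'def
    set b' : EuclideanSpace ℂ (Fin d₁ × Fin d₂) :=
      U (tensorWith2 g'.2 (vp t₀) + tensorWith2 ((γ t₀).2) mp') with hb'def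
    have haf' : ∀ p, HasDerivAt (fun t => af t p) (a' p) t₀ := by
      intro p
      have heq : ∀ t, af t p = ∑ q, ((γ t).2 q.1 * vf t q.2) * Cm q p := by
        intro t; rw [hafdef]; exact hUexp _ _ p
      have hsum : HasDerivAt (fun t => ∑ q, ((γ t).2 q.1 * vf t q.2) * Cm q p)
          (∑ q, (g'.2 q.1 * vf t₀ q.2 + (γ t₀).2 q.1 * m' q.2) * Cm q p) t₀ :=
        HasDerivAt.fun_sum fun q _ => ((hwderiv q.1).mul (hvf' q.2)).mul_const (Cm q p)
      have ha'p : a' p = ∑ q, (g'.2 q.1 * vf t₀ q.2 + (γ t₀).2 q.1 * m' q.2) * Cm q p := by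
        rw [ha'def, map_add]
        have h2 : (U (tensorWith2 g'.2 v₀) + U (tensorWith2 ((γ t₀).2) m')) p
            = U (tensorWith2 g'.2 v₀) p + U (tensorWith2 ((γ t₀).2) m') p := rfl
        rw [h2, hUexp, hUexp, ← Finset.sum_add_distrib]
        congr 1; funext q
        rw [hvf0]
        ring
      rw [ha'p]
      exact HasDerivAt.congr_of_eventuallyEq hsum (Filter.Eventually.of_forall heq)
    have hbf' : ∀ p, HasDerivAt (fun t => bf t p) (b' p) t₀ := by
      intro p
      have heq : ∀ t, bf t p = ∑ q, ((γ t).2 q.1 * vp t q.2) * Cm q p := by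
        intro t; rw [hbfdef]; exact hUexp _ _ p
      have hsum : HasDerivAt (fun t => ∑ q, ((γ t).2 q.1 * vp t q.2) * Cm q p)
          (∑ q, (g'.2 q.1 * vp t₀ q.2 + (γ t₀).2 q.1 * mp' q.2) * Cm q p) t₀ :=
        HasDerivAt.fun_sum fun q _ => ((hwderiv q.1).mul (hvp' q.2)).mul_const (Cm q p)
      have hb'p : b' p = ∑ q, (g'.2 q.1 * vp t₀ q.2 + (γ t₀).2 q.1 * mp' q.2) * Cm q p := by
        rw [hb'def, map_add]
        have h2 : (U (tensorWith2 g'.2 (vp t₀)) + U (tensorWith2 ((γ t₀).2) mp')) p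
            = U (tensorWith2 g'.2 (vp t₀)) p + U (tensorWith2 ((γ t₀).2) mp') p := rfl
        rw [h2, hUexp, hUexp, ← Finset.sum_add_distrib]
        congr 1; funext q
        ring
      rw [hb'p]
      exact HasDerivAt.congr_of_eventuallyEq hsum (Filter.Eventually.of_forall heq)
    -- the differentiated identity
    have hUD : UniqueDiffWithinAt ℝ (Set.Icc (0:ℝ) 1) t₀ := (uniqueDiffOn_Icc zero_lt_one) t₀ ht₀
    have hIeq : (MatOf a') * (MatOf (bf t₀))ᴴ + (MatOf (af t₀)) * (MatOf b')ᴴ = 0 := by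
      ext i k
      have hF0 : ∀ t ∈ Set.Icc (0:ℝ) 1,
          (fun t => ∑ j, af t (i, j) * conj (bf t (k, j))) t = 0 := by
        intro t ht
        have h := congrFun (congrFun (hstruct t ht).1 i) k
        rw [Matrix.mul_apply] at h
        simp only [Matrix.conjTranspose_apply, MatOf_apply, Matrix.zero_apply,
          RCLike.star_def] at h
        exact h
      have hFd : HasDerivAt (fun t => ∑ j, af t (i, j) * conj (bf t (k, j)))
          (∑ j, (a' (i, j) * conj (bf t₀ (k, j)) + af t₀ (i, j) * conj (b' (k, j)))) t₀ :=
        HasDerivAt.fun_sum fun j _ => (haf' (i, j)).mul (hconj (hbf' (k, j)))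
      have hFzero : HasDerivWithinAt (fun t => ∑ j, af t (i, j) * conj (bf t (k, j)))
          0 (Set.Icc (0:ℝ) 1) t₀ :=
        (hasDerivWithinAt_const t₀ _ (0:ℂ)).congr hF0 (hF0 t₀ ht₀)
      have hD0 : (∑ j, (a' (i, j) * conj (bf t₀ (k, j)) + af t₀ (i, j) * conj (b' (k, j))))
          = 0 := by
        rw [← hFd.hasDerivWithinAt.derivWithin hUD, hFzero.derivWithin hUD]
      simp only [Matrix.add_apply, Matrix.mul_apply, Matrix.conjTranspose_apply,
        MatOf_apply, Matrix.zero_apply, RCLike.star_def]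
      rw [← Finset.sum_add_distrib]
      exact hD0
    -- decompositions
    set α : ℂ := conj x₀ * m' 0 + conj y₀ * m' 1 with hαdef
    set β : ℂ := -y₀ * m' 0 + x₀ * m' 1 with hβdef
    have hd0 : m' 0 = α * x₀ + β * (-(conj y₀)) := by
      rw [hαdef, hβdef]
      linear_combination -(m' 0) * hv0sum
    have hd1 : m' 1 = α * y₀ + β * (conj x₀) := by
      rw [hαdef, hβdef]
      linear_combination -(m' 1) * hv0sum
    -- matrices at the base point
    set Am : Matrix (Fin d₁) (Fin d₂) ℂ := MatOf (af t₀) with hAmdef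
    set Bm : Matrix (Fin d₁) (Fin d₂) ℂ := MatOf (bf t₀) with hBmdef
    set Ym : Matrix (Fin d₁) (Fin d₂) ℂ := MatOf (U (tensorWith2 g'.2 (vp t₀))) with hYmdef
    have h2t : Amᴴ * Bm = 0 := (hstruct t₀ ht₀).2.1
    have hBA : Bmᴴ * Am = 0 := by
      have h := congrArg Matrix.conjTranspose h2t
      simpa [Matrix.conjTranspose_mul] using h
    -- decomposition of b'
    have hdecomp2 : mp' = conj α • (vp t₀) + (-(conj β)) • (vf t₀) := by
      have hc1 : conj (m' 1) = conj α * conj y₀ + conj β * x₀ := by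
        have := congrArg conj hd1
        simpa [map_add, map_mul] using this
      have hc0 : conj (m' 0) = conj α * conj x₀ + conj β * (-y₀) := by
        have := congrArg conj hd0
        simpa [map_add, map_mul] using this
      funext i
      fin_cases i
      · show mp' 0 = (conj α • (vp t₀) + (-(conj β)) • (vf t₀)) 0
        simp only [Pi.add_apply, Pi.smul_apply, smul_eq_mul]
        rw [hmp0, hc1, hvp00, hvf0, hv00]
        ring
      · show mp' 1 = (conj α • (vp t₀) + (-(conj β)) • (vf t₀)) 1
        simp only [Pi.add_apply, Pi.smul_apply, smul_eq_mul]
        rw [hmp1, hc0, hvp01, hvf0, hv01]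
        ring
    have hB'dec : MatOf b' = Ym + conj α • Bm + (-(conj β)) • Am := by
      rw [hb'def, hdecomp2, tensorWith2_add_right, tensorWith2_smul_right,
        tensorWith2_smul_right, map_add, map_add, map_smul, map_smul,
        MatOf_add, MatOf_add, MatOf_smul, MatOf_smul, hYmdef, hBmdef, hAmdef,
        hbfdef, hafdef]
      abel
    -- the key algebraic identity
    have hdagger : Amᴴ * Am * (Ymᴴ * Am) = β • (Amᴴ * Am * (Amᴴ * Am)) := by
      have e0 : (MatOf a' * Bmᴴ + Am * (MatOf b')ᴴ) * Am = 0 := by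
        rw [hIeq, Matrix.zero_mul]
      rw [Matrix.add_mul, Matrix.mul_assoc (MatOf a') Bmᴴ Am, hBA, Matrix.mul_zero,
        zero_add] at e0
      rw [hB'dec, Matrix.conjTranspose_add, Matrix.conjTranspose_add,
        Matrix.conjTranspose_smul, Matrix.conjTranspose_smul] at e0
      rw [Matrix.mul_add, Matrix.mul_add, Matrix.add_mul, Matrix.add_mul] at e0
      rw [Matrix.mul_smul, Matrix.mul_smul, Matrix.smul_mul, Matrix.smul_mul] at e0
      rw [Matrix.mul_assoc Am Bmᴴ Am, hBA, Matrix.mul_zero, smul_zero, add_zero] at e0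
      simp only [Complex.star_def, map_neg, Complex.conj_conj, neg_smul] at e0
      -- e0 : Am * Ymᴴ * Am + -(β • (Am * Amᴴ * Am)) = 0
      have e1 : Am * Ymᴴ * Am = β • (Am * Amᴴ * Am) := by
        rw [add_neg_eq_zero] at e0
        exact e0
      have e2 := congrArg (fun M => Amᴴ * M) e1
      rw [Matrix.mul_smul] at e2
      calc Amᴴ * Am * (Ymᴴ * Am) = Amᴴ * (Am * Ymᴴ * Am) := by
            rw [Matrix.mul_assoc Amᴴ Am (Ymᴴ * Am), ← Matrix.mul_assoc Am Ymᴴ Am]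
      _ = β • (Amᴴ * (Am * Amᴴ * Am)) := e2
      _ = β • (Amᴴ * Am * (Amᴴ * Am)) := by
            rw [Matrix.mul_assoc Am Amᴴ Am, ← Matrix.mul_assoc Amᴴ Am (Amᴴ * Am)]
    -- traces
    have htrYA : (Ymᴴ * Am).trace = 0 := by
      rw [hYmdef, hAmdef, hafdef]
      simp only
      rw [trace_matof, LinearIsometry.inner_map_map, inner_tensor]
      have hsum0 : (∑ j, conj (vp t₀ j) * vf t₀ j) = 0 := by
        rw [Fin.sum_univ_two, hvp00, hvp01, hvf0, hv00, hv01]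
        simp only [map_neg, Complex.conj_conj]
        ring
      rw [hsum0, mul_zero]
    have htrA : (Amᴴ * Am).trace = 1 := by
      rw [hAmdef, hafdef]
      simp only
      rw [trace_matof, LinearIsometry.inner_map_map, inner_tensor]
      have hsum1 : (∑ j, conj (vf t₀ j) * vf t₀ j) = 1 := by
        rw [Fin.sum_univ_two, hvf0, hv00, hv01]
        linear_combination hv0sum
      have hw1 : (inner ℂ ((γ t₀).2) ((γ t₀).2) : ℂ) = 1 := by
        rw [inner_self_eq_norm_sq_to_K, hw0]
        norm_num
      rw [hsum1, hw1, one_mul]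
    have hβ0 : β = 0 := key_spectral Am Ym β hdagger htrYA htrA
    -- conclude that the derivative of the projection entries vanishes
    have hm'eq : ∀ k, m' k = α * v₀ k := by
      intro k
      fin_cases k
      · show m' 0 = α * v₀ 0
        rw [hd0, hβ0, hv00]; ring
      · show m' 1 = α * v₀ 1
        rw [hd1, hβ0, hv01]; ring
    have hN0 : N t₀ = 1 := by
      rw [hNdef]
      simp only [Fin.sum_univ_two]
      rw [hvf0, hv00, hv01]
      linear_combination hv0sum
    have hNd : HasDerivAt N (∑ k, (m' k * conj (vf t₀ k) + vf t₀ k * conj (m' k))) t₀ := by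
      rw [hNdef]
      exact HasDerivAt.fun_sum fun k _ => (hvf' k).mul (hconj (hvf' k))
    have hEntry : ∀ i j, g'.1 i j = 0 := by
      intro i j
      have hG0 : ∀ t ∈ Set.Icc (0:ℝ) 1,
          (fun t => vf t i * conj (vf t j) - (γ t).1 i j * N t) t = 0 := by
        intro t ht
        rw [sub_eq_zero]
        exact (hstruct t ht).2.2 i j
      have hGd : HasDerivAt (fun t => vf t i * conj (vf t j) - (γ t).1 i j * N t)
          ((m' i * conj (vf t₀ j) + vf t₀ i * conj (m' j))
            - (g'.1 i j * N t₀ + (γ t₀).1 i j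
                * (∑ k, (m' k * conj (vf t₀ k) + vf t₀ k * conj (m' k))))) t₀ :=
        ((hvf' i).mul (hconj (hvf' j))).sub ((hPderiv i j).mul hNd)
      have hGzero : HasDerivWithinAt (fun t => vf t i * conj (vf t j) - (γ t).1 i j * N t)
          0 (Set.Icc (0:ℝ) 1) t₀ :=
        (hasDerivWithinAt_const t₀ _ (0:ℂ)).congr hG0 (hG0 t₀ ht₀)
      have hE : (m' i * conj (vf t₀ j) + vf t₀ i * conj (m' j))
            - (g'.1 i j * N t₀ + (γ t₀).1 i j
                * (∑ k, (m' k * conj (vf t₀ k) + vf t₀ k * conj (m' k)))) = 0 := by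
        rw [← hGd.hasDerivWithinAt.derivWithin hUD, hGzero.derivWithin hUD]
      rw [hvf0, hN0, hP0e i j, Fin.sum_univ_two, hm'eq i, hm'eq j, hm'eq 0, hm'eq 1,
        hv00, hv01] at hE
      have hcα : ∀ z : ℂ, conj (α * z) = conj α * conj z := fun z => by
        simp [map_mul]
      rw [hcα, hcα, hcα] at hE
      linear_combination -hE - (v₀ i * conj (v₀ j) * (α + conj α)) * hv0sum
    -- wrap up
    have hfst : HasDerivAt (fun t => (γ t).1) g'.1 t₀ :=
      (ContinuousLinearMap.fst ℝ (Fin 2 → Fin 2 → ℂ)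
        (EuclideanSpace ℂ (Fin n))).hasFDerivAt.comp_hasDerivAt t₀ hγd
    have hzero : g'.1 = 0 := by
      funext i j
      exact hEntry i j
    rw [hzero] at hfst
    exact hfst
  -- conclude constancy on [0, 1]
  have hcont : ContinuousOn (fun t => (γ t).1) (Set.Icc (0:ℝ) 1) :=
    continuous_fst.comp_continuousOn (hsmooth.continuousOn.mono hsub)
  have hends := constant_of_has_deriv_right_zero hcont
    (fun x hx => (key x (Set.Ico_subset_Icc_self hx)).hasDerivWithinAt) 1
    (Set.right_mem_Icc.mpr zero_le_one)
  exact congrArg Matrix.of hends.symm
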